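/- arXiv:1101.4178 — 2 statements merged into one kernel-verified Lean document; each statement's English description precedes it below -/
import Mathlib

section
/- Let {Λ_i}_{i∈ℕ} be closed cones in ℝⁿ satisfying the normal qualification condition, and let Λ := ⋂_{i=1}^∞ Λ_i. Then int N̂(0;Λ) ⊆ { Σ_{i=1}^∞ x*_i : x*_i ∈ N(0;Λ_i), the series converges }. -/
open Filter Topology

variable {E : Type*} [NormedAddCommGroup E] [InnerProductSpace ℝ E]

/-- `Λ` is a cone: closed under multiplication by nonnegative scalars. -/
def IsConeSet (Λ : Set E) : Prop := ∀ t : ℝ, 0 ≤ t → ∀ v ∈ Λ, t • v ∈ Λ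

/-- The translate `S - a = {x | x + a ∈ S}`. -/
def Set.translate (S : Set E) (a : E) : Set E := {x | x + a ∈ S}

/-- `v` is a Fréchet `ε`-normal to `Ω` at `x₀` (normals identified with vectors
via the inner product). -/
def IsEpsNormal (ε : ℝ) (v : E) (Ω : Set E) (x₀ : E) : Prop :=
  ∀ η > 0, ∃ δ > 0, ∀ x ∈ Ω, ‖x - x₀‖ < δ → (inner ℝ v (x - x₀) : ℝ) ≤ (ε + η) * ‖x - x₀‖

/-- The Fréchet (regular) normal cone to `Ω` at `x₀`. -/
def frechetNormalCone (Ω : Set E) (x₀ : E) : Set E := {v | IsEpsNormal 0 v Ω x₀}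

/-- The Mordukhovich limiting normal cone to `Ω` at `x₀`: limits of Fréchet
`ε_k`-normals at points `x_k → x₀` of `Ω` with `ε_k ↓ 0`. -/
def limitingNormalCone (Ω : Set E) (x₀ : E) : Set E :=
  {v | ∃ (ε : ℕ → ℝ) (x : ℕ → E) (w : ℕ → E),
    (∀ k, 0 ≤ ε k) ∧ Tendsto ε atTop (𝓝 0) ∧
    (∀ k, x k ∈ Ω) ∧ Tendsto x atTop (𝓝 x₀) ∧
    Tendsto w atTop (𝓝 v) ∧ (∀ k, IsEpsNormal (ε k) (w k) Ω (x k))}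

/-- The normal qualification condition for a countable system of cones. -/
def NormalQualification (n : ℕ) (Λ : ℕ → Set (EuclideanSpace ℝ (Fin n))) : Prop :=
  ∀ x : ℕ → EuclideanSpace ℝ (Fin n),
    (∀ i, x i ∈ limitingNormalCone (Λ i) 0) → HasSum x 0 → ∀ i, x i = 0

/-!
Let `v` be interior to the Fréchet normal cone of `Λ = ⋂ i, Λ i`. Then `⟪v, x⟫ < 0` on `Λ \ {0}`,
so the penalty `P x = ∑ i, 2⁻ⁱ dist(x, Λ i)²`, which is continuous, 2-homogeneous and positive off
`Λ`, satisfies `γ ‖x‖² ≤ P x` on the half-space `0 ≤ ⟪v, x⟫`. For each `K`, a minimizer `x` of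
`K P + ‖·‖² - 2⟪v, ·⟫` has norm at most `M / K`, where `M = 2 ‖v‖ / γ`. Replacing each distance
by the distance to a nearest point `p i` gives a quadratic majorant touching the objective at `x`;
its critical-point equation reads `v - x = ∑ i, K 2⁻ⁱ (x - p i)`, a series of proximal, hence
Fréchet, normals to `Λ i` at `p i` whose terms are bounded by `2⁻ⁱ M`. Extracting a subsequence
converging termwise and passing to the limit under dominated convergence as `K → ∞` gives
limiting normals summing to `v`.
-/

open Metric RealInnerProductSpace Pointwise

lemma IsConeSet.smul_set_eq {Λ : Set E} (hΛ : IsConeSet Λ) {t : ℝ} (ht : 0 < t) : t • Λ = Λ := by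
  refine (Set.smul_set_subset_iff.2 fun x hx => hΛ t ht.le x hx).antisymm fun x hx => ?_
  exact ⟨t⁻¹ • x, hΛ _ (inv_nonneg.2 ht.le) x hx, smul_inv_smul₀ ht.ne' x⟩

lemma IsConeSet.infDist_smul {Λ : Set E} (hΛ : IsConeSet Λ) (h0 : (0 : E) ∈ Λ) {t : ℝ}
    (ht : 0 ≤ t) (x : E) : infDist (t • x) Λ = t * infDist x Λ := by
  rcases ht.eq_or_lt with rfl | ht
  · simp [infDist_zero_of_mem h0]
  · conv_lhs => rw [← hΛ.smul_set_eq ht]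
    rw [infDist_smul₀ ht.ne', Real.norm_of_nonneg ht.le]

lemma isConeSet_iInter {ι : Type*} {Λ : ι → Set E} (hΛ : ∀ i, IsConeSet (Λ i)) :
    IsConeSet (⋂ i, Λ i) := fun t ht x hx =>
  Set.mem_iInter.2 fun i => hΛ i t ht x (Set.mem_iInter.1 hx i)

lemma IsConeSet.inner_nonpos_of_mem_frechetNormalCone {Λ : Set E} (hΛ : IsConeSet Λ) {v x : E}
    (hv : v ∈ frechetNormalCone Λ 0) (hx : x ∈ Λ) : ⟪v, x⟫ ≤ 0 := by
  by_contra! hpos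
  have hx0 : 0 < ‖x‖ := norm_pos_iff.2 (by rintro rfl; simp at hpos)
  obtain ⟨δ, hδ, hδv⟩ := hv (⟪v, x⟫ / (2 * ‖x‖)) (by positivity)
  set t := δ / (2 * ‖x‖)
  have ht : 0 < t := by positivity
  have htx : t * ‖x‖ = δ / 2 := by simp only [t]; field_simp
  have := hδv (t • x) (hΛ t ht.le x hx) (by
    rw [sub_zero, norm_smul, Real.norm_of_nonneg ht.le, htx]; linarith)
  rw [sub_zero, real_inner_smul_right, zero_add, norm_smul, Real.norm_of_nonneg ht.le] at this
  have h2 : ⟪v, x⟫ / (2 * ‖x‖) * (t * ‖x‖) = t * ⟪v, x⟫ / 2 := by field_simp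
  linarith [mul_pos ht hpos]

lemma IsConeSet.inner_neg_of_mem_interior_frechetNormalCone {Λ : Set E} (hΛ : IsConeSet Λ)
    {v x : E} (hv : v ∈ interior (frechetNormalCone Λ 0)) (hx : x ∈ Λ) (hx0 : x ≠ 0) :
    ⟪v, x⟫ < 0 := by
  obtain ⟨ε, hε, hball⟩ := Metric.mem_nhds_iff.1 (mem_interior_iff_mem_nhds.1 hv)
  have hxn : 0 < ‖x‖ := norm_pos_iff.2 hx0
  set t := ε / (2 * ‖x‖)
  have ht : 0 < t := by positivity
  have htx : t * ‖x‖ = ε / 2 := by simp only [t]; field_simp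
  have hmem : v + t • x ∈ ball v ε := by
    rw [mem_ball, dist_eq_norm, add_sub_cancel_left, norm_smul, Real.norm_of_nonneg ht.le, htx]
    linarith
  have := hΛ.inner_nonpos_of_mem_frechetNormalCone (hball hmem) hx
  rw [inner_add_left, real_inner_smul_left, real_inner_self_eq_norm_sq] at this
  nlinarith [mul_pos ht (pow_pos hxn 2)]

lemma isEpsNormal_zero_of_proximal {Λ : Set E} {x p : E} (hnear : ∀ z ∈ Λ, ‖x - p‖ ≤ ‖x - z‖)
    {t : ℝ} (ht : 0 ≤ t) : IsEpsNormal 0 (t • (x - p)) Λ p := by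
  intro η hη
  refine ⟨2 * η / (t + 1), by positivity, fun z hz hzp => ?_⟩
  have hsq : 2 * ⟪x - p, z - p⟫ ≤ ‖z - p‖ ^ 2 := by
    have h := hnear z hz
    rw [show x - z = (x - p) - (z - p) by abel] at h
    have := pow_le_pow_left₀ (norm_nonneg _) h 2
    rw [norm_sub_sq_real (x - p) (z - p)] at this
    linarith
  rw [real_inner_smul_left, zero_add]
  rw [lt_div_iff₀ (by linarith)] at hzp
  nlinarith [norm_nonneg (z - p), mul_le_mul_of_nonneg_left hsq ht]

section Penalty

variable {F : Type*} [NormedAddCommGroup F] {ι : Type*} {c : ι → ℝ} {Λ : ι → Set F}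

lemma infDist_le_norm {s : Set F} (h0 : (0 : F) ∈ s) (x : F) : infDist x s ≤ ‖x‖ := by
  simpa using infDist_le_dist_of_mem (x := x) h0

variable (c Λ) in
noncomputable def sqDistPenalty (x : F) : ℝ :=
  ∑' i, c i * infDist x (Λ i) ^ 2

lemma sqDistPenalty_nonneg (hc0 : ∀ i, 0 ≤ c i) (x : F) : 0 ≤ sqDistPenalty c Λ x :=
  tsum_nonneg fun i => mul_nonneg (hc0 i) (sq_nonneg _)

lemma sqDistPenalty_zero (h0 : ∀ i, (0 : F) ∈ Λ i) : sqDistPenalty c Λ 0 = 0 := by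
  simp [sqDistPenalty, infDist_zero_of_mem (h0 _)]

lemma mul_infDist_sq_le (hc0 : ∀ i, 0 ≤ c i) (h0 : ∀ i, (0 : F) ∈ Λ i) {x : F} {R : ℝ}
    (hx : ‖x‖ ≤ R) (i : ι) : c i * infDist x (Λ i) ^ 2 ≤ c i * R ^ 2 :=
  mul_le_mul_of_nonneg_left
    (pow_le_pow_left₀ infDist_nonneg ((infDist_le_norm (h0 i) x).trans hx) 2) (hc0 i)

lemma summable_mul_infDist_sq (hc : Summable c) (hc0 : ∀ i, 0 ≤ c i)
    (h0 : ∀ i, (0 : F) ∈ Λ i) (x : F) : Summable fun i => c i * infDist x (Λ i) ^ 2 :=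
  Summable.of_nonneg_of_le (fun i => mul_nonneg (hc0 i) (sq_nonneg _))
    (mul_infDist_sq_le hc0 h0 le_rfl) (hc.mul_right _)

lemma continuous_sqDistPenalty (hc : Summable c) (hc0 : ∀ i, 0 ≤ c i)
    (h0 : ∀ i, (0 : F) ∈ Λ i) : Continuous (sqDistPenalty c Λ) := by
  refine continuous_iff_continuousAt.2 fun x => ContinuousOn.continuousAt ?_
    (isOpen_ball.mem_nhds (mem_ball_self (by positivity : (0 : ℝ) < 1)))
  refine continuousOn_tsum (fun i => (((continuous_infDist_pt _).pow 2).const_mul _).continuousOn)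
    (hc.mul_right ((‖x‖ + 1) ^ 2)) fun i y hy => ?_
  rw [Real.norm_of_nonneg (mul_nonneg (hc0 i) (sq_nonneg _))]
  refine mul_infDist_sq_le hc0 h0 ?_ i
  have := norm_le_norm_add_norm_sub' y x
  rw [mem_ball, dist_eq_norm] at hy
  linarith

lemma sqDistPenalty_pos (hc : Summable c) (hcpos : ∀ i, 0 < c i)
    (hclosed : ∀ i, IsClosed (Λ i)) (h0 : ∀ i, (0 : F) ∈ Λ i) {x : F} (hx : x ∉ ⋂ i, Λ i) :
    0 < sqDistPenalty c Λ x := by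
  obtain ⟨i, hi⟩ := by simpa only [Set.mem_iInter, not_forall] using hx
  have hdist := ((hclosed i).notMem_iff_infDist_pos ⟨0, h0 i⟩).1 hi
  exact (summable_mul_infDist_sq hc (fun i => (hcpos i).le) h0 x).tsum_pos
    (fun j => mul_nonneg (hcpos j).le (sq_nonneg _)) i (mul_pos (hcpos i) (pow_pos hdist 2))

end Penalty

lemma sqDistPenalty_smul {ι : Type*} {c : ι → ℝ} {Λ : ι → Set E}
    (hcone : ∀ i, IsConeSet (Λ i)) (h0 : ∀ i, (0 : E) ∈ Λ i) {t : ℝ} (ht : 0 ≤ t) (x : E) :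
    sqDistPenalty c Λ (t • x) = t ^ 2 * sqDistPenalty c Λ x := by
  rw [sqDistPenalty, sqDistPenalty, ← tsum_mul_left]
  congr 1 with i
  rw [(hcone i).infDist_smul (h0 i) ht]
  ring

lemma exists_pos_mul_norm_sq_le [ProperSpace E] {f : E → ℝ} {C : Set E} (hf : Continuous f)
    (hC : IsClosed C) (hCcone : IsConeSet C)
    (hhom : ∀ t : ℝ, 0 ≤ t → ∀ x, f (t • x) = t ^ 2 * f x) (hpos : ∀ x ∈ C, x ≠ 0 → 0 < f x) :
    ∃ γ > 0, ∀ x ∈ C, γ * ‖x‖ ^ 2 ≤ f x := by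
  obtain ⟨γ, hγ, hγf⟩ := ((isCompact_sphere (0 : E) 1).inter_right hC).exists_forall_le'
    hf.continuousOn fun x hx => hpos x hx.2 (ne_of_mem_sphere hx.1 one_ne_zero)
  refine ⟨γ, hγ, fun x hx => ?_⟩
  rcases eq_or_ne x 0 with rfl | hx0
  · have hf0 : f 0 = 0 := by simpa using hhom 0 le_rfl 0
    simp [hf0]
  · have hu : ‖x‖⁻¹ • x ∈ sphere 0 1 ∩ C :=
      ⟨by rw [mem_sphere_zero_iff_norm, norm_smul, norm_inv, norm_norm,
        inv_mul_cancel₀ (norm_ne_zero_iff.2 hx0)], hCcone _ (by positivity) x hx⟩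
    have hfx := hhom ‖x‖ (norm_nonneg x) (‖x‖⁻¹ • x)
    rw [smul_inv_smul₀ (norm_ne_zero_iff.2 hx0)] at hfx
    rw [hfx, mul_comm]
    exact mul_le_mul_of_nonneg_left (hγf _ hu) (sq_nonneg _)

lemma exists_pos_mul_norm_sq_le_sqDistPenalty [ProperSpace E] {ι : Type*} {c : ι → ℝ}
    {Λ : ι → Set E} (hc : Summable c) (hcpos : ∀ i, 0 < c i) (hcone : ∀ i, IsConeSet (Λ i))
    (hclosed : ∀ i, IsClosed (Λ i)) (h0 : ∀ i, (0 : E) ∈ Λ i) {v : E}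
    (hv : v ∈ interior (frechetNormalCone (⋂ i, Λ i) 0)) :
    ∃ γ > 0, ∀ x, 0 ≤ ⟪v, x⟫ → γ * ‖x‖ ^ 2 ≤ sqDistPenalty c Λ x := by
  refine exists_pos_mul_norm_sq_le (C := {x | 0 ≤ ⟪v, x⟫})
    (continuous_sqDistPenalty hc (fun i => (hcpos i).le) h0)
    (isClosed_le continuous_const (continuous_const.inner continuous_id))
    (fun t ht x hx => ?_) (fun t ht x => sqDistPenalty_smul hcone h0 ht x)
    fun x hx hx0 => sqDistPenalty_pos hc hcpos hclosed h0 fun hxΛ => ?_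
  · show 0 ≤ ⟪v, t • x⟫
    rw [real_inner_smul_right]
    exact mul_nonneg ht hx
  · exact hx.not_gt
      ((isConeSet_iInter hcone).inner_neg_of_mem_interior_frechetNormalCone hv hxΛ hx0)

lemma exists_forall_add_norm_sq_sub_inner_le [ProperSpace E] {f : E → ℝ} (hf : Continuous f)
    (hf0 : f 0 = 0) (hf_nonneg : ∀ x, 0 ≤ f x) (v : E) :
    ∃ x, ∀ y, f x + ‖x‖ ^ 2 - 2 * ⟪v, x⟫ ≤ f y + ‖y‖ ^ 2 - 2 * ⟪v, y⟫ := by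
  refine Continuous.exists_forall_le' (f := fun y => f y + ‖y‖ ^ 2 - 2 * ⟪v, y⟫) (by fun_prop) 0 ?_
  filter_upwards [tendsto_norm_cocompact_atTop.eventually_ge_atTop (2 * ‖v‖)] with y hy
  have := real_inner_le_norm v y
  simp only [hf0, norm_zero, inner_zero_right]
  nlinarith [hf_nonneg y, norm_nonneg y]

lemma smul_eq_of_forall_mul_norm_sq_sub_inner_le {a : ℝ} (ha : 0 < a) {w x : E}
    (hmin : ∀ y, a * ‖x‖ ^ 2 - 2 * ⟪w, x⟫ ≤ a * ‖y‖ ^ 2 - 2 * ⟪w, y⟫) : a • x = w := by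
  have hw := hmin (a⁻¹ • w)
  rw [norm_smul, real_inner_smul_right, real_inner_self_eq_norm_sq, Real.norm_of_nonneg
    (inv_nonneg.2 ha.le)] at hw
  have hsq : ‖a • x - w‖ ^ 2 = a * (a * ‖x‖ ^ 2 - 2 * ⟪w, x⟫) + ‖w‖ ^ 2 := by
    rw [norm_sub_sq_real, norm_smul, real_inner_smul_left, real_inner_comm,
      Real.norm_of_nonneg ha.le]
    ring
  have hle : ‖a • x - w‖ ^ 2 ≤ 0 := by
    rw [hsq]
    have : a * (a * (a⁻¹ * ‖w‖) ^ 2 - 2 * (a⁻¹ * ‖w‖ ^ 2)) = -‖w‖ ^ 2 := by field_simp; ring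
    nlinarith
  exact sub_eq_zero.1 (norm_eq_zero.1 (by nlinarith [norm_nonneg (a • x - w)]))

lemma hasSum_mul_norm_sub_sq {ι : Type*} {c : ι → ℝ} {C S : ℝ} {p : ι → E} {q : E}
    (hc : HasSum c C) (hq : HasSum (fun i => c i • p i) q)
    (hS : HasSum (fun i => c i * ‖p i‖ ^ 2) S) (y : E) :
    HasSum (fun i => c i * ‖y - p i‖ ^ 2) (C * ‖y‖ ^ 2 - 2 * ⟪y, q⟫ + S) := by
  have hyq : HasSum (fun i => c i * ⟪y, p i⟫) ⟪y, q⟫ := by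
    simpa [real_inner_smul_right] using hq.mapL (innerSL ℝ y)
  have hterm : (fun i => c i * ‖y - p i‖ ^ 2) =
      fun i => c i * ‖y‖ ^ 2 - 2 * (c i * ⟪y, p i⟫) + c i * ‖p i‖ ^ 2 := by
    funext i
    rw [norm_sub_sq_real]
    ring
  rw [hterm]
  exact ((hc.mul_right _).sub (hyq.mul_left 2)).add hS

lemma mul_norm_le_of_penalized_nonpos {f : E → ℝ} {v x : E} {K γ : ℝ} (hK : 0 < K)
    (hγ : 0 < γ) (hf_nonneg : ∀ y, 0 ≤ f y) (hγf : ∀ y, 0 ≤ ⟪v, y⟫ → γ * ‖y‖ ^ 2 ≤ f y)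
    (hx : K * f x + ‖x‖ ^ 2 - 2 * ⟪v, x⟫ ≤ 0) : K * ‖x‖ ≤ 2 * ‖v‖ / γ := by
  have hKf := mul_nonneg hK.le (hf_nonneg x)
  have hvx : 0 ≤ ⟪v, x⟫ := by nlinarith [sq_nonneg ‖x‖]
  have hγx := mul_le_mul_of_nonneg_left (hγf x hvx) hK.le
  have hCS := real_inner_le_norm v x
  rw [le_div_iff₀ hγ]
  rcases (norm_nonneg x).eq_or_lt with hx0 | hx0
  · rw [← hx0, mul_zero, zero_mul]; positivity
  · refine le_of_mul_le_mul_right ?_ hx0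
    nlinarith

section Penalized

variable {ι : Type*} {c : ι → ℝ} {C : ℝ} {Λ : ι → Set E}

lemma smul_eq_of_isMin_penalized (hc : HasSum c C) (hc0 : ∀ i, 0 ≤ c i)
    (h0 : ∀ i, (0 : E) ∈ Λ i) {K : ℝ} (hK : 0 ≤ K) {v x : E}
    (hx : ∀ y, K * sqDistPenalty c Λ x + ‖x‖ ^ 2 - 2 * ⟪v, x⟫ ≤
      K * sqDistPenalty c Λ y + ‖y‖ ^ 2 - 2 * ⟪v, y⟫)
    {p : ι → E} (hpΛ : ∀ i, p i ∈ Λ i) (hpx : ∀ i, infDist x (Λ i) = ‖x - p i‖) {q : E}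
    (hq : HasSum (fun i => c i • p i) q) (hS : Summable fun i => c i * ‖p i‖ ^ 2) :
    (K * C + 1) • x = v + K • q := by
  obtain ⟨S, hS⟩ := hS
  have hT := hasSum_mul_norm_sub_sq hc hq hS
  -- The quadratic `∑ c i ‖y - p i‖²` majorizes the penalty and touches it at `x`.
  have hle : ∀ y, sqDistPenalty c Λ y ≤ C * ‖y‖ ^ 2 - 2 * ⟪y, q⟫ + S := fun y =>
    hasSum_le (fun i => mul_le_mul_of_nonneg_left (pow_le_pow_left₀ infDist_nonneg
        (by simpa [dist_eq_norm] using infDist_le_dist_of_mem (x := y) (hpΛ i)) 2) (hc0 i))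
      (summable_mul_infDist_sq hc.summable hc0 h0 y).hasSum (hT y)
  have heq : sqDistPenalty c Λ x = C * ‖x‖ ^ 2 - 2 * ⟪x, q⟫ + S := by
    rw [← (hT x).tsum_eq, sqDistPenalty]
    simp only [hpx]
  refine smul_eq_of_forall_mul_norm_sq_sub_inner_le (by nlinarith [hc.nonneg hc0]) fun y => ?_
  have := mul_le_mul_of_nonneg_left (hle y) hK
  rw [inner_add_left, inner_add_left, real_inner_smul_left, real_inner_smul_left,
    real_inner_comm x q, real_inner_comm y q]
  linarith [hx y, congrArg (K * ·) heq]

lemma exists_proximal_decomposition [ProperSpace E] (hc : HasSum c C) (hc0 : ∀ i, 0 ≤ c i)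
    (hclosed : ∀ i, IsClosed (Λ i)) (h0 : ∀ i, (0 : E) ∈ Λ i) {v : E} {γ : ℝ} (hγ : 0 < γ)
    (hγP : ∀ x, 0 ≤ ⟪v, x⟫ → γ * ‖x‖ ^ 2 ≤ sqDistPenalty c Λ x) {K : ℝ} (hK : 0 < K) :
    ∃ (x : E) (p : ι → E), (∀ i, p i ∈ Λ i) ∧ (∀ i, ‖p i‖ ≤ 2 * ‖x‖) ∧
      K * ‖x‖ ≤ 2 * ‖v‖ / γ ∧ (∀ i, IsEpsNormal 0 ((K * c i) • (x - p i)) (Λ i) (p i)) ∧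
      (∀ i, ‖(K * c i) • (x - p i)‖ ≤ c i * (2 * ‖v‖ / γ)) ∧
      HasSum (fun i => (K * c i) • (x - p i)) (v - x) := by
  have hP0 := sqDistPenalty_zero (c := c) h0
  have hKP := fun y => mul_nonneg hK.le (sqDistPenalty_nonneg (Λ := Λ) hc0 y)
  obtain ⟨x, hx⟩ := exists_forall_add_norm_sq_sub_inner_le
    ((continuous_sqDistPenalty hc.summable hc0 h0).const_mul K) (by simp [hP0]) hKP v
  choose p hpΛ hpx using fun i => (hclosed i).exists_infDist_eq_dist ⟨0, h0 i⟩ x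
  simp only [dist_eq_norm] at hpx
  have hnear : ∀ i, ∀ z ∈ Λ i, ‖x - p i‖ ≤ ‖x - z‖ := fun i z hz => by
    simpa [hpx i, dist_eq_norm] using infDist_le_dist_of_mem (x := x) hz
  have hpx_le : ∀ i, ‖x - p i‖ ≤ ‖x‖ := fun i => by simpa using hnear i 0 (h0 i)
  have hp : ∀ i, ‖p i‖ ≤ 2 * ‖x‖ := fun i => by
    linarith [norm_le_norm_add_norm_sub' (p i) x, norm_sub_rev (p i) x, hpx_le i]
  obtain ⟨q, hq⟩ : Summable fun i => c i • p i :=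
    Summable.of_norm_bounded (hc.summable.mul_right _) fun i => by
      rw [norm_smul, Real.norm_of_nonneg (hc0 i)]
      exact mul_le_mul_of_nonneg_left (hp i) (hc0 i)
  have hS : Summable fun i => c i * ‖p i‖ ^ 2 :=
    Summable.of_nonneg_of_le (fun i => mul_nonneg (hc0 i) (sq_nonneg _))
      (fun i => mul_le_mul_of_nonneg_left (pow_le_pow_left₀ (norm_nonneg _) (hp i) 2) (hc0 i))
      (hc.summable.mul_right _)
  have hcrit := smul_eq_of_isMin_penalized hc hc0 h0 hK.le hx hpΛ hpx hq hS
  have hxM := mul_norm_le_of_penalized_nonpos hK hγ (sqDistPenalty_nonneg hc0) hγP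
    (by simpa [hP0] using hx 0)
  refine ⟨x, p, hpΛ, hp, hxM,
    fun i => isEpsNormal_zero_of_proximal (hnear i) (mul_nonneg hK.le (hc0 i)), fun i => ?_, ?_⟩
  · rw [norm_smul, Real.norm_of_nonneg (mul_nonneg hK.le (hc0 i)), mul_comm K, mul_assoc]
    exact mul_le_mul_of_nonneg_left
      ((mul_le_mul_of_nonneg_left (hpx_le i) hK.le).trans hxM) (hc0 i)
  have hsum : v - x = K • (C • x - q) := by
    linear_combination (norm := module) (-1 : ℝ) • hcrit
  rw [hsum, show (fun i => (K * c i) • (x - p i)) = fun i => K • (c i • x - c i • p i) by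
    funext i; module]
  exact ((hc.smul_const x).sub hq).const_smul K

end Penalized

lemma exists_hasSum_limitingNormalCone_of_tendsto [ProperSpace E] {Λ : ℕ → Set E}
    {b : ℕ → ℝ} (hb : Summable b) {u : ℕ → E} {v : E} (hu : Tendsto u atTop (𝓝 v))
    {p y : ℕ → ℕ → E} (hpΛ : ∀ k i, p k i ∈ Λ i)
    (hp : ∀ i, Tendsto (fun k => p k i) atTop (𝓝 0))
    (hy : ∀ k i, IsEpsNormal 0 (y k i) (Λ i) (p k i)) (hyb : ∀ k i, ‖y k i‖ ≤ b i)
    (hsum : ∀ k, HasSum (y k) (u k)) :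
    ∃ L : ℕ → E, (∀ i, L i ∈ limitingNormalCone (Λ i) 0) ∧ HasSum L v := by
  obtain ⟨L, hL, σ, hσ, hyL⟩ :=
    (isCompact_univ_pi fun i => isCompact_closedBall (0 : E) (b i)).tendsto_subseq
      fun k => Set.mem_univ_pi.2 fun i => mem_closedBall_zero_iff.2 (hyb k i)
  have hyLi : ∀ i, Tendsto (fun j => y (σ j) i) atTop (𝓝 (L i)) := tendsto_pi_nhds.1 hyL
  refine ⟨L, fun i => ⟨fun _ => 0, fun j => p (σ j) i, fun j => y (σ j) i, fun _ => le_rfl,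
    tendsto_const_nhds, fun j => hpΛ _ i, (hp i).comp hσ.tendsto_atTop, hyLi i,
    fun j => hy _ i⟩, ?_⟩
  have hLb : ∀ i, ‖L i‖ ≤ b i := fun i => mem_closedBall_zero_iff.1 (Set.mem_univ_pi.1 hL i)
  have hlim := tendsto_tsum_of_dominated_convergence hb hyLi
    (Eventually.of_forall fun j i => hyb (σ j) i)
  simp only [(hsum _).tsum_eq] at hlim
  rw [tendsto_nhds_unique (hu.comp hσ.tendsto_atTop) hlim]
  exact (Summable.of_norm_bounded hb hLb).hasSum

theorem interior_frechet_normal_cone_general (n : ℕ) (Λ : ℕ → Set (EuclideanSpace ℝ (Fin n)))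
    (hcone : ∀ i, IsConeSet (Λ i)) (hclosed : ∀ i, IsClosed (Λ i))
    (h0 : ∀ i, (0 : EuclideanSpace ℝ (Fin n)) ∈ Λ i) :
    interior (frechetNormalCone (⋂ i, Λ i) 0) ⊆
      {v | ∃ x : ℕ → EuclideanSpace ℝ (Fin n),
        (∀ i, x i ∈ limitingNormalCone (Λ i) 0) ∧ HasSum x v} := by
  intro v hv
  have hc := hasSum_geometric_two
  have hcpos : ∀ i : ℕ, 0 < ((1 : ℝ) / 2) ^ i := fun i => by positivity
  obtain ⟨γ, hγ, hγP⟩ :=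
    exists_pos_mul_norm_sq_le_sqDistPenalty hc.summable hcpos hcone hclosed h0 hv
  choose x p hpΛ hp hx hy hyb hsum using fun k : ℕ =>
    exists_proximal_decomposition hc (fun i => (hcpos i).le) hclosed h0 hγ hγP
      (K := ((k + 1 : ℕ) : ℝ)) (by positivity)
  have hx0 : Tendsto x atTop (𝓝 0) :=
    squeeze_zero_norm (fun k => (le_div_iff₀' (by positivity)).2 (hx k))
      ((tendsto_const_div_atTop_nhds_zero_nat _).comp (tendsto_add_atTop_nat 1))
  exact exists_hasSum_limitingNormalCone_of_tendsto (hc.summable.mul_right _)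
    (by simpa using tendsto_const_nhds.sub hx0) hpΛ
    (fun i => squeeze_zero_norm (hp · i) (by simpa using hx0.norm.const_mul 2)) hy hyb hsum

/-- interior of the Fréchet normal cone to a countable intersection. -/
theorem interior_frechet_normal_cone (n : ℕ) (Λ : ℕ → Set (EuclideanSpace ℝ (Fin n)))
    (hcone : ∀ i, IsConeSet (Λ i)) (hclosed : ∀ i, IsClosed (Λ i))
    (h0 : ∀ i, (0 : EuclideanSpace ℝ (Fin n)) ∈ Λ i)
    (hqc : NormalQualification n Λ) :
    interior (frechetNormalCone (⋂ i, Λ i) 0) ⊆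
      {v | ∃ x : ℕ → EuclideanSpace ℝ (Fin n),
        (∀ i, x i ∈ limitingNormalCone (Λ i) 0) ∧ HasSum x v} :=
  interior_frechet_normal_cone_general n Λ hcone hclosed h0
end

section
/- Let {Λ_i}_{i∈ℕ} be closed cones in ℝⁿ satisfying the normal qualification condition and each normally regular at the origin (N(0;Λ_i) = N̂(0;Λ_i)). Then for Λ := ⋂_{i=1}^∞ Λ_i the Fréchet normal cone is computed exactly as N̂(0;Λ) = cl { Σ_{i∈I} x*_i : x*_i ∈ N(0;Λ_i), I a finite subset of ℕ }. -/
/-!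
For a cone, Fréchet normals at the origin are exactly the polar cone, so the claim is that the
polar of `⋂ Λᵢ` is the closed convex cone generated by the polars of the `Λᵢ`. A point outside
that closure is separated from it by some `w` lying in every bipolar of `Λᵢ`, and regularity
makes each `Λᵢ` equal to its bipolar: if `p` is a nearest point of `Λᵢ` to `w`, then `w - p` is a
proximal, hence Fréchet, normal at `p`; rescaling `p` to the origin makes it a limiting normal at
`0`, so by regularity it lies in the polar, and then `‖w - p‖² ≤ ⟪w - p, w⟫ ≤ 0`.
-/

open Filter Topology

variable {E : Type*} [NormedAddCommGroup E] [InnerProductSpace ℝ E]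

open scoped RealInnerProductSpace

def polarCone (Λ : Set E) : Set E := {v | ∀ x ∈ Λ, ⟪v, x⟫ ≤ 0}

lemma isClosed_polarCone (Λ : Set E) : IsClosed (polarCone Λ) := by
  simp only [polarCone, Set.ofPred_forall]
  exact isClosed_biInter fun x _ => isClosed_le (continuous_id.inner continuous_const)
    continuous_const

lemma polarCone_anti {Λ Λ' : Set E} (h : Λ ⊆ Λ') : polarCone Λ' ⊆ polarCone Λ :=
  fun _ hv x hx => hv x (h hx)

lemma zero_mem_polarCone (Λ : Set E) : (0 : E) ∈ polarCone Λ :=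
  fun x _ => (inner_zero_left x).le

lemma add_mem_polarCone {Λ : Set E} {a b : E} (ha : a ∈ polarCone Λ) (hb : b ∈ polarCone Λ) :
    a + b ∈ polarCone Λ :=
  fun x hx => by rw [inner_add_left]; exact add_nonpos (ha x hx) (hb x hx)

lemma isConeSet_polarCone (Λ : Set E) : IsConeSet (polarCone Λ) :=
  fun t ht v hv x hx => by
    rw [real_inner_smul_left]; exact mul_nonpos_of_nonneg_of_nonpos ht (hv x hx)

lemma IsConeSet.iInter {ι : Sort*} {Λ : ι → Set E} (h : ∀ i, IsConeSet (Λ i)) :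
    IsConeSet (⋂ i, Λ i) :=
  fun t ht v hv => Set.mem_iInter.2 fun i => h i t ht v (Set.mem_iInter.1 hv i)

lemma IsEpsNormal.inner_nonpos_of_eventually_mem {Ω : Set E} {v p d : E}
    (hv : IsEpsNormal 0 v Ω p) (hd : ∀ᶠ s : ℝ in 𝓝[>] 0, p + s • d ∈ Ω) : ⟪v, d⟫ ≤ 0 := by
  have hle : ∀ η > 0, ⟪v, d⟫ ≤ η * ‖d‖ := by
    intro η hη
    obtain ⟨δ, hδ, hΩ⟩ := hv η hη
    have hshort : ∀ᶠ s : ℝ in 𝓝[>] 0, ‖s • d‖ < δ := by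
      have : Tendsto (fun s : ℝ => ‖s • d‖) (𝓝[>] 0) (𝓝 0) :=
        tendsto_nhdsWithin_of_tendsto_nhds (Continuous.tendsto' (by fun_prop) 0 0 (by simp))
      exact this.eventually (gt_mem_nhds hδ)
    obtain ⟨s, hs, hsΩ, hsδ⟩ := (eventually_mem_nhdsWithin.and (hd.and hshort)).exists
    have := hΩ _ hsΩ (by rwa [add_sub_cancel_left])
    rw [add_sub_cancel_left, zero_add, inner_smul_right, norm_smul,
      Real.norm_of_nonneg (le_of_lt hs), mul_left_comm] at this
    exact le_of_mul_le_mul_left this hs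
  have hlim : Tendsto (fun η : ℝ => η * ‖d‖) (𝓝[>] 0) (𝓝 0) :=
    tendsto_nhdsWithin_of_tendsto_nhds (Continuous.tendsto' (by fun_prop) 0 0 (zero_mul _))
  exact ge_of_tendsto hlim (eventually_nhdsWithin_of_forall hle)

lemma IsConeSet.frechetNormalCone_zero_eq {Λ : Set E} (hΛ : IsConeSet Λ) :
    frechetNormalCone Λ 0 = polarCone Λ := by
  ext v
  refine ⟨fun hv x hx => hv.inner_nonpos_of_eventually_mem ?_, fun hv η hη => ?_⟩
  · exact eventually_nhdsWithin_of_forall fun s hs => by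
      simpa using hΛ s (le_of_lt hs) x hx
  · refine ⟨1, one_pos, fun x hx _ => ?_⟩
    rw [sub_zero, zero_add]
    exact (hv x hx).trans (by positivity)

lemma IsConeSet.isEpsNormal_zero_smul {Λ : Set E} (hΛ : IsConeSet Λ) {u p : E} {c : ℝ}
    (hc : 0 < c) (h : IsEpsNormal 0 u Λ p) : IsEpsNormal 0 u Λ (c • p) := by
  intro η hη
  obtain ⟨δ, hδ, H⟩ := h η hη
  refine ⟨c * δ, by positivity, fun x hx hxδ => ?_⟩
  have hx' : x - c • p = c • (c⁻¹ • x - p) := by rw [smul_sub, smul_inv_smul₀ hc.ne']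
  rw [hx', norm_smul, Real.norm_of_nonneg hc.le] at hxδ ⊢
  have := H _ (hΛ _ (inv_nonneg.2 hc.le) x hx) (lt_of_mul_lt_mul_left hxδ hc.le)
  rw [zero_add] at this
  rw [inner_smul_right, zero_add, mul_left_comm]
  exact mul_le_mul_of_nonneg_left this hc.le

lemma IsConeSet.mem_limitingNormalCone_zero {Λ : Set E} (hΛ : IsConeSet Λ) {u p : E}
    (hp : p ∈ Λ) (h : IsEpsNormal 0 u Λ p) : u ∈ limitingNormalCone Λ 0 := by
  refine ⟨fun _ => 0, fun k => (1 / ((k : ℝ) + 1)) • p, fun _ => u, fun _ => le_rfl,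
    tendsto_const_nhds, fun k => hΛ _ (by positivity) p hp, ?_, tendsto_const_nhds,
    fun k => hΛ.isEpsNormal_zero_smul (by positivity) h⟩
  simpa using (tendsto_one_div_add_atTop_nhds_zero_nat (𝕜 := ℝ)).smul_const p

lemma inner_sub_le_half_norm_sq_of_forall_norm_le {Ω : Set E} {w p : E}
    (hp : ∀ x ∈ Ω, ‖w - p‖ ≤ ‖w - x‖) {x : E} (hx : x ∈ Ω) :
    ⟪w - p, x - p⟫ ≤ ‖x - p‖ ^ 2 / 2 := by
  have hsq := pow_le_pow_left₀ (norm_nonneg _) (hp x hx) 2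
  have hexp : ‖w - x‖ ^ 2 = ‖w - p‖ ^ 2 - 2 * ⟪w - p, x - p⟫ + ‖x - p‖ ^ 2 := by
    rw [← norm_sub_sq_real, sub_sub_sub_cancel_right]
  linarith

lemma isEpsNormal_zero_sub_of_forall_norm_le {Ω : Set E} {w p : E}
    (hp : ∀ x ∈ Ω, ‖w - p‖ ≤ ‖w - x‖) : IsEpsNormal 0 (w - p) Ω p := by
  intro η hη
  refine ⟨2 * η, by positivity, fun x hx hxδ => ?_⟩
  have := inner_sub_le_half_norm_sq_of_forall_norm_le hp hx
  rw [zero_add]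
  nlinarith [norm_nonneg (x - p)]

lemma IsConeSet.polarCone_polarCone_subset [ProperSpace E] {Λ : Set E} (hΛ : IsConeSet Λ)
    (hclosed : IsClosed Λ) (h0 : (0 : E) ∈ Λ)
    (hreg : limitingNormalCone Λ 0 = frechetNormalCone Λ 0) :
    polarCone (polarCone Λ) ⊆ Λ := by
  intro w hw
  obtain ⟨p, hp, hpw⟩ := hclosed.exists_infDist_eq_dist ⟨0, h0⟩ w
  have hnear : ∀ x ∈ Λ, ‖w - p‖ ≤ ‖w - x‖ := fun x hx => by
    rw [← dist_eq_norm, ← dist_eq_norm, ← hpw]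
    exact Metric.infDist_le_dist_of_mem hx
  have hnormal := isEpsNormal_zero_sub_of_forall_norm_le hnear
  have hpolar : w - p ∈ polarCone Λ := by
    rw [← hΛ.frechetNormalCone_zero_eq, ← hreg]
    exact hΛ.mem_limitingNormalCone_zero hp hnormal
  have hp_nonneg : 0 ≤ ⟪w - p, p⟫ := by
    have := hnormal.inner_nonpos_of_eventually_mem (d := -p) <| by
      filter_upwards [Ioo_mem_nhdsGT one_pos] with s hs
      convert hΛ (1 - s) (by linarith [hs.2]) p hp using 1
      rw [sub_smul, one_smul, smul_neg, sub_eq_add_neg]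
    rwa [inner_neg_right, neg_nonpos] at this
  have hw_nonpos : ⟪w - p, w⟫ ≤ 0 := real_inner_comm (w - p) w ▸ hw _ hpolar
  have hsq : ‖w - p‖ ^ 2 ≤ 0 := by
    rw [← real_inner_self_eq_norm_sq, inner_sub_right (w - p) w p]
    linarith
  have hwp : w = p := by
    rw [← sub_eq_zero, ← norm_eq_zero]
    exact (pow_eq_zero_iff two_ne_zero).1 (le_antisymm hsq (sq_nonneg _))
  exact hwp ▸ hp

section finiteSums

variable {ι : Type*}

section AddCommMonoid

variable {M : Type*} [AddCommMonoid M]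

/-- The index function `x` is total, so each `N i` must be nonempty for `finiteSums N` to be. -/
def finiteSums (N : ι → Set M) : Set M :=
  {v | ∃ (I : Finset ι) (x : ι → M), (∀ i, x i ∈ N i) ∧ v = ∑ i ∈ I, x i}

variable {N : ι → Set M}

lemma subset_finiteSums (h0 : ∀ i, (0 : M) ∈ N i) (i : ι) : N i ⊆ finiteSums N := by
  classical
  intro a ha
  refine ⟨{i}, Pi.single i a, fun j => ?_, by simp⟩
  by_cases hj : j = i
  · subst hj; simpa using ha
  · simpa [Pi.single_apply, hj] using h0 j

lemma zero_mem_finiteSums (h0 : ∀ i, (0 : M) ∈ N i) : (0 : M) ∈ finiteSums N :=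
  ⟨∅, 0, h0, by simp⟩

lemma add_mem_finiteSums (h0 : ∀ i, (0 : M) ∈ N i)
    (hadd : ∀ i, ∀ a ∈ N i, ∀ b ∈ N i, a + b ∈ N i) {a b : M} (ha : a ∈ finiteSums N)
    (hb : b ∈ finiteSums N) : a + b ∈ finiteSums N := by
  classical
  obtain ⟨I, x, hx, rfl⟩ := ha
  obtain ⟨J, y, hy, rfl⟩ := hb
  have hext : ∀ (K : Finset ι) (z : ι → M), (∀ i, z i ∈ N i) →
      ∀ i, (if i ∈ K then z i else 0) ∈ N i := fun K z hz i => by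
    split_ifs
    exacts [hz i, h0 i]
  refine ⟨I ∪ J, fun i => (if i ∈ I then x i else 0) + (if i ∈ J then y i else 0),
    fun i => hadd i _ (hext I x hx i) _ (hext J y hy i), ?_⟩
  rw [Finset.sum_add_distrib, Finset.sum_ite_mem, Finset.sum_ite_mem,
    Finset.union_inter_cancel_left, Finset.union_inter_cancel_right]

end AddCommMonoid

variable {N : ι → Set E}

lemma isConeSet_finiteSums (hN : ∀ i, IsConeSet (N i)) : IsConeSet (finiteSums N) := by
  rintro t ht _ ⟨I, x, hx, rfl⟩
  exact ⟨I, t • x, fun i => hN i t ht _ (hx i), Finset.smul_sum⟩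

lemma convex_finiteSums (h0 : ∀ i, (0 : E) ∈ N i)
    (hadd : ∀ i, ∀ a ∈ N i, ∀ b ∈ N i, a + b ∈ N i) (hN : ∀ i, IsConeSet (N i)) :
    Convex ℝ (finiteSums N) :=
  fun _ ha _ hb _ _ hs ht _ => add_mem_finiteSums h0 hadd
    (isConeSet_finiteSums hN _ hs _ ha) (isConeSet_finiteSums hN _ ht _ hb)

lemma finiteSums_polarCone_subset_polarCone_iInter (Λ : ι → Set E) :
    finiteSums (fun i => polarCone (Λ i)) ⊆ polarCone (⋂ i, Λ i) := by
  rintro _ ⟨I, x, hx, rfl⟩ y hy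
  rw [sum_inner]
  exact Finset.sum_nonpos fun i _ => hx i y (Set.mem_iInter.1 hy i)

end finiteSums

lemma exists_mem_polarCone_inner_pos_of_notMem_closure [CompleteSpace E] {K : Set E}
    (hconv : Convex ℝ K) (hK : IsConeSet K) (h0 : (0 : E) ∈ K) {v : E} (hv : v ∉ closure K) :
    ∃ w ∈ polarCone K, 0 < ⟪w, v⟫ := by
  obtain ⟨f, u, hfK, hfv⟩ :=
    geometric_hahn_banach_closed_point hconv.closure isClosed_closure hv
  have hu : 0 < u := by simpa using hfK 0 (subset_closure h0)
  refine ⟨(InnerProductSpace.toDual ℝ E).symm f, fun z hz => ?_, ?_⟩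
  · rw [InnerProductSpace.toDual_symm_apply]
    by_contra! hfz
    have := hfK _ (subset_closure (hK (u / f z) (by positivity) z hz))
    rw [map_smul, smul_eq_mul, div_mul_cancel₀ _ hfz.ne'] at this
    exact this.false
  · rw [InnerProductSpace.toDual_symm_apply]
    linarith

lemma polarCone_iInter_eq_closure_finiteSums [CompleteSpace E] {ι : Type*} {Λ : ι → Set E}
    (hbipolar : ∀ i, polarCone (polarCone (Λ i)) ⊆ Λ i) :
    polarCone (⋂ i, Λ i) = closure (finiteSums fun i => polarCone (Λ i)) := by
  refine subset_antisymm (fun v hv => ?_) (closure_minimal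
    (finiteSums_polarCone_subset_polarCone_iInter Λ) (isClosed_polarCone _))
  by_contra hvS
  have h0 i := zero_mem_polarCone (Λ i)
  obtain ⟨w, hwS, hwv⟩ := exists_mem_polarCone_inner_pos_of_notMem_closure
    (convex_finiteSums h0 (fun i _ ha _ hb => add_mem_polarCone ha hb)
      (fun i => isConeSet_polarCone _))
    (isConeSet_finiteSums fun i => isConeSet_polarCone _) (zero_mem_finiteSums h0) hvS
  have hw : w ∈ ⋂ i, Λ i := Set.mem_iInter.2 fun i =>
    hbipolar i (polarCone_anti (subset_finiteSums h0 i) hwS)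
  exact (hv w hw).not_gt (real_inner_comm v w ▸ hwv)

theorem frechet_normal_cone_of_regular_cones_general (n : ℕ)
    (Λ : ℕ → Set (EuclideanSpace ℝ (Fin n)))
    (hcone : ∀ i, IsConeSet (Λ i)) (hclosed : ∀ i, IsClosed (Λ i))
    (h0 : ∀ i, (0 : EuclideanSpace ℝ (Fin n)) ∈ Λ i)
    (hreg : ∀ i, limitingNormalCone (Λ i) 0 = frechetNormalCone (Λ i) 0) :
    frechetNormalCone (⋂ i, Λ i) 0 =
      closure {v | ∃ (I : Finset ℕ) (x : ℕ → EuclideanSpace ℝ (Fin n)),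
        (∀ i, x i ∈ limitingNormalCone (Λ i) 0) ∧ v = ∑ i ∈ I, x i} := by
  have hpolar i : limitingNormalCone (Λ i) 0 = polarCone (Λ i) :=
    (hreg i).trans (hcone i).frechetNormalCone_zero_eq
  change _ = closure (finiteSums fun i => limitingNormalCone (Λ i) 0)
  rw [(IsConeSet.iInter hcone).frechetNormalCone_zero_eq, funext hpolar]
  exact polarCone_iInter_eq_closure_finiteSums fun i =>
    (hcone i).polarCone_polarCone_subset (hclosed i) (h0 i) (hreg i)

/-- exact computation of the Fréchet normal cone to a countable
intersection of normally regular cones. -/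
theorem frechet_normal_cone_of_regular_cones (n : ℕ)
    (Λ : ℕ → Set (EuclideanSpace ℝ (Fin n)))
    (hcone : ∀ i, IsConeSet (Λ i)) (hclosed : ∀ i, IsClosed (Λ i))
    (h0 : ∀ i, (0 : EuclideanSpace ℝ (Fin n)) ∈ Λ i)
    (hqc : NormalQualification n Λ)
    (hreg : ∀ i, limitingNormalCone (Λ i) 0 = frechetNormalCone (Λ i) 0) :
    frechetNormalCone (⋂ i, Λ i) 0 =
      closure {v | ∃ (I : Finset ℕ) (x : ℕ → EuclideanSpace ℝ (Fin n)),
        (∀ i, x i ∈ limitingNormalCone (Λ i) 0) ∧ v = ∑ i ∈ I, x i} :=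
  frechet_normal_cone_of_regular_cones_general n Λ hcone hclosed h0 hreg
end
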